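/- arXiv:2109.04695 — 4 statements merged into one kernel-verified Lean document; each statement's English description precedes it below -/
import Mathlib

section
/- Let H be a complex inner product space (inner product conjugate-linear in the first argument). Let g, b ∈ H be orthonormal (‖g‖ = ‖b‖ = 1 and ⟪g, b⟫ = 0), let θ ∈ ℝ, and set ψ = (sin θ) • g + (cos θ) • b. Let U : H →ₗ[ℂ] H be a linear map with U g = −g and U b = b, let R : H → H be the map R x = 2⟪ψ, x⟫ • ψ − x, and define the Grover operator G = R ∘ U. Then for every natural number t, G^t ψ = (sin((2t+1)θ)) • g + (cos((2t+1)θ)) • b. -/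
/-! On the unit circle `α ↦ sin α • g + cos α • b` of the plane spanned by `g` and `b`, the oracle
`U` is the reflection `α ↦ -α` and `R` is the reflection `α ↦ 2θ - α` in `ψ`, the point at angle
`θ`. Their composite `G` is therefore the rotation `α ↦ α + 2θ`, and `t` iterations take `ψ` from
angle `θ` to angle `(2t + 1)θ`. -/

open Function

namespace Grover

variable {H : Type*} [NormedAddCommGroup H] [InnerProductSpace ℂ H]

noncomputable def circlePoint (g b : H) (α : ℝ) : H :=
  (Real.sin α : ℂ) • g + (Real.cos α : ℂ) • b

variable {g b : H}

theorem inner_circlePoint (hg : ‖g‖ = 1) (hb : ‖b‖ = 1) (hgb : (inner ℂ g b : ℂ) = 0)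
    (α β : ℝ) : inner ℂ (circlePoint g b α) (circlePoint g b β) = (Real.cos (α - β) : ℂ) := by
  have hbg : (inner ℂ b g : ℂ) = 0 := by rw [← inner_conj_symm, hgb, map_zero]
  have hgg : (inner ℂ g g : ℂ) = 1 := by rw [inner_self_eq_norm_sq_to_K, hg]; norm_num
  have hbb : (inner ℂ b b : ℂ) = 1 := by rw [inner_self_eq_norm_sq_to_K, hb]; norm_num
  simp only [circlePoint, inner_add_left, inner_add_right, inner_smul_left, inner_smul_right,
    Complex.conj_ofReal, hgg, hbb, hgb, hbg, Real.cos_sub]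
  push_cast
  ring

theorem reflect_circlePoint (hg : ‖g‖ = 1) (hb : ‖b‖ = 1) (hgb : (inner ℂ g b : ℂ) = 0)
    (θ α : ℝ) :
    (2 * inner ℂ (circlePoint g b θ) (circlePoint g b α)) • circlePoint g b θ
      - circlePoint g b α = circlePoint g b (2 * θ - α) := by
  have hsin : Real.sin (2 * θ - α) = 2 * Real.cos (θ - α) * Real.sin θ - Real.sin α := by
    rw [Real.sin_sub, Real.cos_sub, Real.sin_two_mul, Real.cos_two_mul]
    linear_combination (-2 * Real.sin α) * Real.sin_sq_add_cos_sq θ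
  have hcos : Real.cos (2 * θ - α) = 2 * Real.cos (θ - α) * Real.cos θ - Real.cos α := by
    rw [Real.cos_sub, Real.cos_sub, Real.sin_two_mul, Real.cos_two_mul]
    ring
  rw [inner_circlePoint hg hb hgb]
  simp only [circlePoint, hsin, hcos]
  push_cast
  module

theorem map_circlePoint_eq_neg {U : H →ₗ[ℂ] H} (hUg : U g = -g) (hUb : U b = b) (α : ℝ) :
    U (circlePoint g b α) = circlePoint g b (-α) := by
  simp [circlePoint, hUg, hUb]

theorem iterate_circlePoint_of_rotation {G : H → H} {c : ℝ}
    (hG : ∀ α, G (circlePoint g b α) = circlePoint g b (α + c)) (t : ℕ) (α : ℝ) :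
    G^[t] (circlePoint g b α) = circlePoint g b (α + t * c) := by
  have hconj : Semiconj (circlePoint g b) (· + c) G := fun α => (hG α).symm
  rw [← (hconj.iterate_right t) α, add_right_iterate_apply, nsmul_eq_mul]

end Grover

open Grover in
/-- Iterating the Grover operator t times rotates ψ from angle θ to
(2t+1)θ. -/
theorem grover_operator_iterated
    {H : Type*} [NormedAddCommGroup H] [InnerProductSpace ℂ H]
    (g b : H) (hg : ‖g‖ = 1) (hb : ‖b‖ = 1) (hgb : (inner ℂ g b : ℂ) = 0)
    (θ : ℝ) (ψ : H) (hψ : ψ = (Real.sin θ : ℂ) • g + (Real.cos θ : ℂ) • b)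
    (U : H →ₗ[ℂ] H) (hUg : U g = -g) (hUb : U b = b)
    (R : H → H) (hR : ∀ x, R x = (2 * (inner ℂ ψ x : ℂ)) • ψ - x)
    (G : H → H) (hG : G = R ∘ U) :
    ∀ t : ℕ, G^[t] ψ =
      (Real.sin ((2 * t + 1) * θ) : ℂ) • g +
        (Real.cos ((2 * t + 1) * θ) : ℂ) • b := by
  change ψ = circlePoint g b θ at hψ
  have hrotation : ∀ α, G (circlePoint g b α) = circlePoint g b (α + 2 * θ) := fun α => by
    rw [hG, comp_apply, map_circlePoint_eq_neg hUg hUb, hR, hψ,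
      reflect_circlePoint hg hb hgb]
    congr 1
    ring
  intro t
  rw [hψ, iterate_circlePoint_of_rotation hrotation]
  congr 1
  ring
end

section
/- Let l be a natural number with 2 ≤ l and let x be a real number with 1/2 + 1/2^l ≤ x < 1. Then there exists a natural number i with 2 ≤ i ≤ l such that the i-th binary digit of x equals 1, i.e., ⌊2^i · x⌋ is odd. -/
/-- If x ∈ [1/2 + 2^{−l}, 1), then some binary digit of x in a position
between 2 and l equals 1. -/
theorem binary_digit_exists_of_gap
    (l : ℕ) (hl : 2 ≤ l) (x : ℝ)
    (hx : 1 / 2 + 1 / 2 ^ l ≤ x) (hx' : x < 1) :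
    ∃ i : ℕ, 2 ≤ i ∧ i ≤ l ∧ Odd ⌊(2 : ℝ) ^ i * x⌋ := by
  by_contra h
  push_neg at h
  have heven : ∀ i : ℕ, 2 ≤ i → i ≤ l → Even ⌊(2:ℝ)^i * x⌋ := fun i h1 h2 =>
    Int.not_odd_iff_even.mp (h i h1 h2)
  have hx0 : (1:ℝ)/2 ≤ x := le_trans (le_add_of_nonneg_right (by positivity)) hx
  have claim : ∀ i : ℕ, 1 ≤ i → i ≤ l → ⌊(2:ℝ)^i * x⌋ = 2^(i-1) := by
    intro i
    induction i with
    | zero => omega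
    | succ i ih =>
      intro h1 h2
      rcases Nat.eq_zero_or_pos i with rfl | hi
      · norm_num
        rw [Int.floor_eq_iff]
        constructor
        · push_cast; linarith
        · push_cast; linarith
      · obtain ⟨k, rfl⟩ : ∃ k, i = k + 1 := ⟨i - 1, by omega⟩
        have hif := ih (by omega) (by omega)
        simp only [Nat.add_sub_cancel] at hif ⊢
        have hlow : (2:ℝ)^k ≤ 2^(k+1) * x := by
          have := Int.floor_le ((2:ℝ)^(k+1) * x)
          rw [hif] at this; push_cast at this; exact this
        have hhigh : (2:ℝ)^(k+1) * x < 2^k + 1 := by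
          have := Int.lt_floor_add_one ((2:ℝ)^(k+1) * x)
          rw [hif] at this; push_cast at this; exact this
        have e1 : (2:ℝ)^(k+2) * x = 2 * (2^(k+1) * x) := by ring
        have e2 : (2:ℝ)^(k+1) = 2 * 2^k := by ring
        have hle : (2:ℤ)^(k+1) ≤ ⌊(2:ℝ)^(k+1+1) * x⌋ := by
          apply Int.le_floor.mpr
          push_cast
          have e1' : (2:ℝ)^(k+1+1) * x = 2 * (2^(k+1) * x) := by ring
          linarith
        have hlt : ⌊(2:ℝ)^(k+1+1) * x⌋ < 2^(k+1) + 2 := by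
          apply Int.floor_lt.mpr
          push_cast
          have e1' : (2:ℝ)^(k+1+1) * x = 2 * (2^(k+1) * x) := by ring
          linarith
        have hev := heven (k+2) (by omega) (by omega)
        have hev2 : Even ((2:ℤ)^(k+1)) := (Int.even_pow).mpr ⟨even_two, by omega⟩
        obtain ⟨a, ha⟩ := hev
        obtain ⟨b, hb⟩ := hev2
        rw [show (k+1+1) = k+2 from rfl] at *
        omega
  have hfl := claim l (by omega) le_rfl
  obtain ⟨m, rfl⟩ : ∃ m, l = m + 1 := ⟨l - 1, by omega⟩
  simp only [Nat.add_sub_cancel] at hfl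
  have hge : (2:ℤ)^m + 1 ≤ ⌊(2:ℝ)^(m+1) * x⌋ := by
    apply Int.le_floor.mpr
    push_cast
    have : (2:ℝ)^(m+1) * (1/2 + 1/2^(m+1)) = 2^m + 1 := by
      field_simp; ring
    nlinarith [pow_pos (by norm_num : (0:ℝ) < 2) (m+1)]
  omega
end

section
/- Let n and m be natural numbers with 1 ≤ m ≤ 2^n − 1, let θ = Real.arccos (Real.sqrt (m / 2^n)), let x = 1 − θ/π, and let l = ⌈n/2⌉ + 3 (in Lean, (n+1)/2 + 3). Then there exists a natural number i with 2 ≤ i ≤ l such that ⌊2^i · x⌋ is odd; i.e., the binary expansion of x = (2π − 2θ)/(2π) has a digit equal to 1 in some position between 2 and l. -/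
/-!
Since `0 < θ < π / 2`, the number `x = 1 - θ / π = 1 / 2 + arcsin t / π` (with `t = √(m / 2 ^ n)`)
has first binary digit `1`. If its digits `2, …, l` all vanished, doubling would give
`⌊2 ^ l * x⌋ = 2 ^ (l - 1)`, i.e. `arcsin t / π < 2⁻ˡ`. But `arcsin t ≥ t ≥ 2 ^ (-⌈n/2⌉)` and
`π ≤ 4`, so `arcsin t / π ≥ 2 ^ (-⌈n/2⌉ - 2) > 2⁻ˡ`.
-/

namespace Int

lemma floor_two_mul_eq_of_even {y : ℝ} (h : Even ⌊2 * y⌋) : ⌊2 * y⌋ = 2 * ⌊y⌋ := by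
  have hle : 2 * ⌊y⌋ ≤ ⌊2 * y⌋ :=
    le_floor.mpr (by push_cast; linarith [floor_le y])
  have hlt : ⌊2 * y⌋ < 2 * ⌊y⌋ + 2 :=
    floor_lt.mpr (by push_cast; linarith [lt_floor_add_one y])
  obtain ⟨r, hr⟩ := h
  omega

lemma floor_two_pow_mul_eq_of_forall_even (x : ℝ) (a k : ℕ)
    (h : ∀ i, a < i → i ≤ a + k → Even ⌊(2 : ℝ) ^ i * x⌋) :
    ⌊(2 : ℝ) ^ (a + k) * x⌋ = 2 ^ k * ⌊(2 : ℝ) ^ a * x⌋ := by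
  induction k with
  | zero => simp
  | succ k ih =>
    have hdouble : (2 : ℝ) ^ (a + (k + 1)) * x = 2 * ((2 : ℝ) ^ (a + k) * x) := by ring
    have heven := h (a + (k + 1)) (by omega) le_rfl
    rw [hdouble] at heven ⊢
    rw [floor_two_mul_eq_of_even heven, ih fun i hi hik ↦ h i hi (by omega)]
    ring

lemma exists_odd_floor_two_pow_mul_of_lt {x : ℝ} {a k : ℕ}
    (h : 2 ^ k * ⌊(2 : ℝ) ^ a * x⌋ < ⌊(2 : ℝ) ^ (a + k) * x⌋) :
    ∃ i, a < i ∧ i ≤ a + k ∧ Odd ⌊(2 : ℝ) ^ i * x⌋ := by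
  by_contra! hodd
  exact h.ne' <| floor_two_pow_mul_eq_of_forall_even x a k
    fun i hi hik ↦ not_odd_iff_even.mp (hodd i hi hik)

lemma exists_odd_floor_two_pow_mul_half_add {δ : ℝ} {l : ℕ} (hδ : δ < 1 / 2)
    (hl : 1 ≤ 2 ^ l * δ) : ∃ i, 2 ≤ i ∧ i ≤ l ∧ Odd ⌊(2 : ℝ) ^ i * (1 / 2 + δ)⌋ := by
  have hδ0 : 0 < δ := pos_of_mul_pos_right (one_pos.trans_le hl) (by positivity)
  have hl₀ : l ≠ 0 := by
    rintro rfl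
    norm_num at hl
    linarith
  obtain ⟨k, rfl⟩ : ∃ k, l = 1 + k := ⟨l - 1, by omega⟩
  have hfirst : ⌊(2 : ℝ) ^ 1 * (1 / 2 + δ)⌋ = 1 :=
    floor_eq_iff.mpr ⟨by push_cast; linarith, by push_cast; linarith⟩
  have hlast : 2 ^ k + 1 ≤ ⌊(2 : ℝ) ^ (1 + k) * (1 / 2 + δ)⌋ := by
    refine le_floor.mpr ?_
    have : (2 : ℝ) ^ (1 + k) * (1 / 2 + δ) = 2 ^ k + 2 ^ (1 + k) * δ := by ring
    push_cast
    linarith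
  exact exists_odd_floor_two_pow_mul_of_lt (a := 1) (by rw [hfirst, mul_one]; omega)

end Int

lemma Real.self_le_arcsin {t : ℝ} (ht₀ : 0 ≤ t) (ht₁ : t ≤ 1) : t ≤ Real.arcsin t := by
  simpa [Real.sin_arcsin (by linarith) ht₁] using Real.sin_le (Real.arcsin_nonneg.mpr ht₀)

lemma one_le_two_pow_mul_sqrt_div_two_pow {m : ℕ} (hm : 1 ≤ m) (n : ℕ) :
    1 ≤ (2 : ℝ) ^ ((n + 1) / 2) * √((m : ℝ) / 2 ^ n) := by
  have hpow : (2 : ℝ) ^ n ≤ ((2 : ℝ) ^ ((n + 1) / 2)) ^ 2 := by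
    rw [← pow_mul]
    exact pow_le_pow_right₀ (by norm_num) (by omega)
  have hsq : 1 ≤ ((2 : ℝ) ^ ((n + 1) / 2) * √((m : ℝ) / 2 ^ n)) ^ 2 := by
    rw [mul_pow, Real.sq_sqrt (by positivity), ← mul_div_assoc, one_le_div (by positivity)]
    have : (1 : ℝ) ≤ m := by exact_mod_cast hm
    nlinarith
  exact (one_le_sq_iff₀ (by positivity)).mp hsq

/-- If a hyperplane misclassifies m of the 2^n data points with
1 ≤ m ≤ 2^n − 1, then the binary expansion of x = (2π − 2θ)/(2π) = 1 − θ/π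
has a digit equal to 1 in some position between 2 and l = ⌈n/2⌉ + 3. -/
theorem misclassification_phase_digit
    (n m : ℕ) (hm : 1 ≤ m) (hm' : m ≤ 2 ^ n - 1)
    (θ : ℝ) (hθ : θ = Real.arccos (Real.sqrt ((m : ℝ) / 2 ^ n)))
    (x : ℝ) (hx : x = 1 - θ / Real.pi)
    (l : ℕ) (hl : l = (n + 1) / 2 + 3) :
    ∃ i : ℕ, 2 ≤ i ∧ i ≤ l ∧ Odd ⌊(2 : ℝ) ^ i * x⌋ := by
  subst hθ hx hl
  set t := √((m : ℝ) / 2 ^ n)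
  set c := (n + 1) / 2
  have hπ := Real.pi_pos
  have ht₀ : 0 ≤ t := Real.sqrt_nonneg _
  have ht₁ : t < 1 := by
    have hm_lt : m < 2 ^ n := by have := n.one_le_two_pow; omega
    refine (Real.sqrt_lt' one_pos).mpr ?_
    rw [one_pow, div_lt_one (by positivity)]
    exact_mod_cast hm_lt
  have hx : 1 - Real.arccos t / Real.pi = 1 / 2 + Real.arcsin t / Real.pi := by
    rw [Real.arccos_eq_pi_div_two_sub_arcsin]
    field_simp
    ring
  rw [hx]
  apply Int.exists_odd_floor_two_pow_mul_half_add
  · rw [div_lt_iff₀ hπ]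
    linarith [Real.arcsin_lt_pi_div_two.mpr ht₁]
  · have hct : 1 ≤ (2 : ℝ) ^ c * t := one_le_two_pow_mul_sqrt_div_two_pow hm n
    have harcsin := Real.self_le_arcsin ht₀ ht₁.le
    rw [mul_div_assoc', le_div_iff₀ hπ, one_mul, pow_add]
    nlinarith [Real.pi_le_four, mul_le_mul_of_nonneg_left harcsin (by positivity : (0 : ℝ) ≤ 2 ^ c)]
end

section
/- Let n be a natural number and let L be a natural number with L ≤ 2^n − 1. Then π/2 − Real.arcsin (Real.sqrt (L / 2^n)) ≥ 1/2^{n/2}, i.e., the angular gap δ = π/2 − θ between the angle θ = arcsin(√(L/2^n)) of any hyperplane that misclassifies at least one of the 2^n data points and the angle π/2 of a perfect classifier is at least 2^{−n/2}. -/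
/-- The angular gap between the Grover angle of a hyperplane misclassifying
at least one of the 2^n data points and the angle π/2 of a perfect classifier
is at least 2^{−n/2}. -/
theorem angular_gap_lower_bound
    (n L : ℕ) (hL : L ≤ 2 ^ n - 1) :
    Real.pi / 2 - Real.arcsin (Real.sqrt ((L : ℝ) / 2 ^ n)) ≥
      1 / (2 : ℝ) ^ ((n : ℝ) / 2) := by
  set t : ℝ := 1 / (2 : ℝ) ^ ((n : ℝ) / 2) with ht
  have h2n : (0 : ℝ) < 2 ^ n := by positivity
  have hbase : (1 : ℝ) ≤ (2 : ℝ) ^ ((n : ℝ) / 2) := by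
    apply Real.one_le_rpow (by norm_num) (by positivity)
  have ht0 : 0 < t := by positivity
  have ht1 : t ≤ 1 := by
    rw [ht, div_le_one (by positivity)]; exact hbase
  have ht2 : t ^ 2 = 1 / 2 ^ n := by
    rw [ht, div_pow, one_pow, ← Real.rpow_natCast ((2:ℝ) ^ ((n:ℝ)/2)) 2,
      ← Real.rpow_natCast (2:ℝ) n, ← Real.rpow_mul (by norm_num)]
    norm_num
  -- L / 2^n ≤ 1 - 1/2^n
  have hLle : (L : ℝ) ≤ 2 ^ n - 1 := by
    have : (L : ℝ) ≤ ((2 ^ n - 1 : ℕ) : ℝ) := Nat.cast_le.mpr hL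
    calc (L:ℝ) ≤ ((2 ^ n - 1 : ℕ) : ℝ) := this
      _ ≤ 2 ^ n - 1 := by
          rw [Nat.cast_sub (Nat.one_le_two_pow)]
          push_cast; norm_num
  have hx : (L : ℝ) / 2 ^ n ≤ 1 - 1 / 2 ^ n := by
    rw [div_le_iff₀ h2n]
    have he : (1 - 1 / (2:ℝ) ^ n) * 2 ^ n = 2 ^ n - 1 := by
      rw [sub_mul, one_mul, one_div, inv_mul_cancel₀ (ne_of_gt h2n)]
    linarith
  -- √(L/2^n) ≤ cos t
  have hcos : Real.sqrt ((L : ℝ) / 2 ^ n) ≤ Real.cos t := by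
    have h1 : Real.sqrt ((L : ℝ) / 2 ^ n) ≤ 1 - t ^ 2 / 2 := by
      have hnn : 0 ≤ 1 - t ^ 2 / 2 := by nlinarith
      rw [show (1 : ℝ) - t ^ 2 / 2 = Real.sqrt ((1 - t ^ 2 / 2) ^ 2) by
        rw [Real.sqrt_sq hnn]]
      apply Real.sqrt_le_sqrt
      rw [ht2]
      nlinarith [hx, sq_nonneg (1 / (2:ℝ) ^ n)]
    exact h1.trans (Real.one_sub_sq_div_two_le_cos)
  -- conclude
  have harc : Real.arcsin (Real.sqrt ((L : ℝ) / 2 ^ n)) ≤ Real.pi / 2 - t := by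
    have : Real.arcsin (Real.cos t) = Real.pi / 2 - t := by
      rw [← Real.sin_pi_div_two_sub, Real.arcsin_sin] <;> nlinarith [Real.pi_gt_three]
    calc Real.arcsin (Real.sqrt ((L : ℝ) / 2 ^ n)) ≤ Real.arcsin (Real.cos t) :=
          Real.monotone_arcsin hcos
      _ = Real.pi / 2 - t := this
  linarith
end
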